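/- Let Γ = (Γ, ≤, μ, (φ_x)_{x∈V(Γ)}) be a trickle graph. Then the map S(Γ) → Tr(Γ) sending the syllable x^a to the element x^a of Tr(Γ) is injective. In particular, V(Γ) embeds into Tr(Γ) (distinct generators represent distinct group elements). -/

import Mathlib

open scoped Classical

universe u

namespace SimpleGraph

/-- `y` belongs to the star of `x` in `G` (i.e. `y = x` or `y` is a neighbour of `x`). -/
def InStar {V : Type u} (G : SimpleGraph V) (x y : V) : Prop := y = x ∨ G.Adj x y

end SimpleGraph

/-- A **trickle graph**: a simplicial graph together with a partial order on the vertices,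
a vertex labeling `mu` with values in `ℕ≥2 ∪ {∞}`, and, for every vertex `x`, an automorphism
`phi x` of the star of `x` (encoded as a permutation of the whole vertex set fixing every
vertex outside of the star of `x`), subject to conditions (a)–(g) of Bellingeri–Chemin–Paris. -/
structure TrickleGraph (V : Type u) [PartialOrder V] where
  /-- the underlying simplicial graph -/
  graph : SimpleGraph V
  /-- the vertex labeling, with `⊤` playing the role of `∞` -/
  mu : V → ℕ∞
  /-- the automorphism of the star of each vertex, extended by the identity -/
  phi : V → Equiv.Perm V
  two_le_mu : ∀ x : V, 2 ≤ mu x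
  /-- condition (a) -/
  adj_of_lt : ∀ x y : V, x < y → graph.Adj x y
  /-- `phi x` is supported on the star of `x` -/
  phi_apply_of_not_inStar : ∀ x y : V, ¬ graph.InStar x y → phi x y = y
  /-- `phi x` maps the star of `x` to itself -/
  inStar_phi : ∀ x y : V, graph.InStar x y → graph.InStar x (phi x y)
  /-- `phi x` is a graph automorphism of the (full subgraph spanned by the) star of `x` -/
  adj_phi_iff : ∀ x y z : V, graph.InStar x y → graph.InStar x z →
      (graph.Adj (phi x y) (phi x z) ↔ graph.Adj y z)
  /-- condition (b) -/
  adj_incomp : ∀ x y z : V, graph.Adj x y → ¬ x ≤ y → ¬ y ≤ x → z ≤ y →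
      graph.Adj x z ∧ ¬ x ≤ z ∧ ¬ z ≤ x
  /-- condition (c) -/
  le_phi_iff : ∀ x y z : V, graph.InStar x y → graph.InStar x z →
      (phi x z ≤ phi x y ↔ z ≤ y)
  /-- condition (d) -/
  lt_of_phi_ne : ∀ x y : V, graph.InStar x y → phi x y ≠ y → y < x
  /-- condition (e): if `mu x` is finite then the order of `phi x` divides `mu x` -/
  phi_pow_mu : ∀ x : V, phi x ^ WithTop.untopD 0 (mu x) = 1
  /-- condition (f) -/
  mu_phi : ∀ x y : V, graph.InStar x y → mu (phi x y) = mu y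
  /-- condition (g) -/
  phi_phi : ∀ x y z : V, z < y → y < x →
      phi x (phi y z) = phi (phi x y) (phi x z)

namespace TrickleGraph

variable {V : Type u} [PartialOrder V]

/-- The set of defining relators of the trickle group: `x ^ (mu x)` whenever `mu x ≠ ∞`, and
`phi_x(y) · x · (phi_y(x) · y)⁻¹` for every edge `{x, y}`. -/
def rels (T : TrickleGraph V) : Set (FreeGroup V) :=
  {r | ∃ (x : V) (n : ℕ), T.mu x = (n : ℕ∞) ∧ r = FreeGroup.of x ^ n} ∪
  {r | ∃ x y : V, T.graph.Adj x y ∧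
      r = FreeGroup.of (T.phi x y) * FreeGroup.of x *
          (FreeGroup.of (T.phi y x) * FreeGroup.of y)⁻¹}

end TrickleGraph

/-- The **trickle group** of a trickle graph. -/
abbrev TrickleGroup {V : Type u} [PartialOrder V] (T : TrickleGraph V) : Type u :=
  PresentedGroup T.rels

namespace TrickleGraph

variable {V : Type u} [PartialOrder V]

/-- The image of a vertex in the trickle group. -/
def gen (T : TrickleGraph V) (x : V) : TrickleGroup T := PresentedGroup.of x

/-- `mu` converted to a natural number, with `∞` mapped to `0` (so that `ZMod (T.muNat x)`
is the group `ℤ_{mu x}` of the paper, `ZMod 0 = ℤ` corresponding to `mu x = ∞`). -/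
def muNat (T : TrickleGraph V) (x : V) : ℕ := WithTop.untopD 0 (T.mu x)

/-- The power `phi_x^a` for an exponent `a ∈ ℤ_{mu x}`; it is well defined on representatives
by condition (e). -/
def phiPow (T : TrickleGraph V) (x : V) (a : ZMod (T.muNat x)) : Equiv.Perm V :=
  T.phi x ^ (ZMod.cast a : ℤ)

theorem mu_phi_apply (T : TrickleGraph V) (x y : V) : T.mu (T.phi x y) = T.mu y := by
  by_cases h : T.graph.InStar x y
  · exact T.mu_phi x y h
  · rw [T.phi_apply_of_not_inStar x y h]

theorem mu_phi_zpow (T : TrickleGraph V) (x : V) :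
    ∀ (n : ℤ) (y : V), T.mu ((T.phi x ^ n) y) = T.mu y := by
  have hinv : ∀ y : V, T.mu ((T.phi x)⁻¹ y) = T.mu y := by
    intro y
    conv_rhs => rw [← show (T.phi x) ((T.phi x)⁻¹ y) = y from Equiv.apply_symm_apply _ _]
    exact (T.mu_phi_apply x ((T.phi x)⁻¹ y)).symm
  intro n
  induction n using Int.induction_on with
  | zero => intro y; simp
  | succ k ih =>
      intro y
      have h : (T.phi x ^ ((k : ℤ) + 1)) y = (T.phi x ^ (k : ℤ)) (T.phi x y) := by
        rw [zpow_add_one]; rfl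
      rw [h, ih (T.phi x y), T.mu_phi_apply]
  | pred k ih =>
      intro y
      have h : (T.phi x ^ (-(k : ℤ) - 1)) y = (T.phi x ^ (-(k : ℤ))) ((T.phi x)⁻¹ y) := by
        rw [zpow_sub_one]; rfl
      rw [h, ih ((T.phi x)⁻¹ y), hinv]

theorem mu_phiPow (T : TrickleGraph V) (x : V) (a : ZMod (T.muNat x)) (y : V) :
    T.mu ((T.phiPow x a) y) = T.mu y :=
  T.mu_phi_zpow x _ y

theorem muNat_phiPow (T : TrickleGraph V) (x : V) (a : ZMod (T.muNat x)) (y : V) :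
    T.muNat ((T.phiPow x a) y) = T.muNat y :=
  congrArg (fun m : ℕ∞ => WithTop.untopD 0 m) (T.mu_phiPow x a y)

end TrickleGraph

/-- Transport of a `ZMod` element along an equality of moduli. -/
def zmodCongr {m k : ℕ} (h : m = k) (a : ZMod m) : ZMod k := by subst h; exact a

theorem zmodCongr_ne_zero {m k : ℕ} (h : m = k) {a : ZMod m} (ha : a ≠ 0) :
    zmodCongr h a ≠ 0 := by subst h; exact ha

/-- A **syllable** `x^a`, where `x` is a vertex and `a ∈ ℤ_{mu x} \ {0}`. -/
def Syllable {V : Type u} [PartialOrder V] (T : TrickleGraph V) : Type u :=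
  Σ x : V, {a : ZMod (T.muNat x) // a ≠ 0}

namespace Syllable

variable {V : Type u} [PartialOrder V] {T : TrickleGraph V}

/-- The element of the trickle group represented by a syllable. -/
def elm (s : Syllable T) : TrickleGroup T :=
  (PresentedGroup.of s.1 : TrickleGroup T) ^ (ZMod.cast s.2.val : ℤ)

end Syllable

/-- Syllabic words. -/
abbrev SylWord {V : Type u} [PartialOrder V] (T : TrickleGraph V) := List (Syllable T)

/-- The element of the trickle group represented by a syllabic word. -/
def SylWord.eval {V : Type u} [PartialOrder V] {T : TrickleGraph V} (w : SylWord T) :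
    TrickleGroup T :=
  (w.map Syllable.elm).prod


/-!
Send the generator `x` to `(eₓ, φₓ)` in the semidirect product `(V → Π n, ZMod n) ⋊ Perm V`, where
`Perm V` permutes the `V`-coordinates and `eₓ` is the unit vector at `x` in the coordinate
`n = μ(x)`. For an edge `{x, y}` with `¬ x < y` we have `φ_y(x) = x`, `φ_{φₓ(y)}(x) = x` and
`φ_{φₓ(y)} ∘ φₓ = φₓ ∘ φ_y` (conditions (b)–(d) and (g)), which is exactly what the edge relation
needs; the power relations hold by (e) and (f). The image of a syllable `x^a` has first component
`a • eₓ`, from which both `x` and `a` can be read off.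
-/

namespace SemidirectProduct

variable {N G : Type*} [Group N] [Group G] {φ : G →* MulAut N}

theorem inr_mul_inl (g : G) (n : N) :
    (inr g * inl n : N ⋊[φ] G) = inl (φ g n) * inr g := by
  rw [inl_aut, map_inv, inv_mul_cancel_right]

end SemidirectProduct

namespace TrickleGraph

variable {V : Type u} [PartialOrder V] (T : TrickleGraph V)

theorem phi_apply_of_not_lt {x y : V} (h : ¬ y < x) : T.phi x y = y := by
  by_contra hne
  by_cases hs : T.graph.InStar x y
  · exact h (T.lt_of_phi_ne x y hs hne)
  · exact hne (T.phi_apply_of_not_inStar x y hs)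

theorem phi_self (x : V) : T.phi x x = x :=
  T.phi_apply_of_not_lt (lt_irrefl x)

theorem inStar_of_lt {x y : V} (h : y < x) : T.graph.InStar x y :=
  Or.inr (T.adj_of_lt y x h).symm

theorem phi_lt_phi_iff {x y z : V} (hy : T.graph.InStar x y) (hz : T.graph.InStar x z) :
    T.phi x z < T.phi x y ↔ z < y := by
  rw [lt_iff_le_not_ge, lt_iff_le_not_ge, T.le_phi_iff x y z hy hz, T.le_phi_iff x z y hz hy]

theorem phi_lt_self {x z : V} (h : z < x) : T.phi x z < x := by
  simpa only [T.phi_self] using (T.phi_lt_phi_iff (Or.inl rfl) (T.inStar_of_lt h)).mpr h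

theorem phi_phi_mul_phi_of_lt {x y : V} (hyx : y < x) :
    T.phi (T.phi x y) * T.phi x = T.phi x * T.phi y := by
  refine Equiv.ext fun z => ?_
  show T.phi (T.phi x y) (T.phi x z) = T.phi x (T.phi y z)
  by_cases hzy : z < y
  · exact (T.phi_phi x y z hzy hyx).symm
  rw [T.phi_apply_of_not_lt hzy]
  refine T.phi_apply_of_not_lt fun hlt => ?_
  by_cases hz : T.graph.InStar x z
  · exact hzy ((T.phi_lt_phi_iff (T.inStar_of_lt hyx) hz).mp hlt)
  · rw [T.phi_apply_of_not_inStar x z hz] at hlt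
    exact hz (T.inStar_of_lt (hlt.trans (T.phi_lt_self hyx)))

theorem commute_phi_of_incomparable {x y : V} (h : T.graph.Adj x y) (hxy : ¬ x ≤ y)
    (hyx : ¬ y ≤ x) : Commute (T.phi x) (T.phi y) := by
  have fix : ∀ {a b c : V}, T.graph.Adj a b → ¬ a ≤ b → ¬ b ≤ a → c ≤ b → T.phi a c = c :=
    fun hab hab' hba hcb => T.phi_apply_of_not_lt fun hca =>
      (T.adj_incomp _ _ _ hab hab' hba hcb).2.2 hca.le
  refine Equiv.ext fun z => ?_
  show T.phi x (T.phi y z) = T.phi y (T.phi x z)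
  by_cases hzy : z < y
  · rw [fix h hxy hyx hzy.le, fix h hxy hyx (T.phi_lt_self hzy).le]
  rw [T.phi_apply_of_not_lt hzy]
  by_cases hzx : z < x
  · rw [fix h.symm hyx hxy (T.phi_lt_self hzx).le]
  · rw [T.phi_apply_of_not_lt hzx, T.phi_apply_of_not_lt hzy]

theorem phi_phi_mul_phi {x y : V} (h : T.graph.Adj x y) (hxy : ¬ x < y) :
    T.phi (T.phi x y) * T.phi x = T.phi x * T.phi y := by
  by_cases hyx : y < x
  · exact T.phi_phi_mul_phi_of_lt hyx
  rw [T.phi_apply_of_not_lt hyx]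
  exact (T.commute_phi_of_incomparable h (fun hle => hxy (hle.lt_of_ne h.ne))
    (fun hle => hyx (hle.lt_of_ne h.ne.symm))).eq.symm

theorem phi_phi_apply_self {x y : V} (hxy : ¬ x < y) : T.phi (T.phi x y) x = x := by
  refine T.phi_apply_of_not_lt fun hlt => ?_
  by_cases hyx : y < x
  · exact lt_asymm hlt (T.phi_lt_self hyx)
  · exact hxy (by rwa [T.phi_apply_of_not_lt hyx] at hlt)

theorem muNat_phi (x y : V) : T.muNat (T.phi x y) = T.muNat y :=
  congrArg (WithTop.untopD 0) (T.mu_phi_apply x y)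

theorem muNat_ne_one (x : V) : T.muNat x ≠ 1 := by
  intro h
  have h2 := T.two_le_mu x
  rcases WithTop.untopD_eq_iff.mp h with h' | ⟨-, h'⟩
  · rw [h'] at h2
    exact absurd (ENat.natCast_le_natCast.mp h2) (by norm_num)
  · exact one_ne_zero h'

instance nontrivial_zmod_muNat (x : V) : Nontrivial (ZMod (T.muNat x)) :=
  ZMod.nontrivial_iff.mpr (T.muNat_ne_one x)

/-- A vertex `x` records its exponent in the coordinate `n = μ(x)`, so that it contributes a copy of
`ℤ_{μ(x)}` (with `ZMod 0 = ℤ` for `μ(x) = ∞`), while the label-preserving permutations `φ_y` can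
still act on `V → Coeffs` simply by permuting `V`. -/
abbrev Coeffs : Type := Multiplicative ((n : ℕ) → ZMod n)

abbrev Target (V : Type u) : Type u := (V → Coeffs) ⋊[mulAutArrow] Equiv.Perm V

open SemidirectProduct

noncomputable def basisVec (x : V) : V → Coeffs :=
  Pi.mulSingle x (Multiplicative.ofAdd (Pi.single (T.muNat x) 1))

noncomputable def genImage (x : V) : Target V :=
  inl (T.basisVec x) * inr (T.phi x)

theorem mulAutArrow_phi_basisVec (y x : V) :
    mulAutArrow (T.phi y) (T.basisVec x) = T.basisVec (T.phi y x) := by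
  funext v
  show Pi.mulSingle x _ ((T.phi y)⁻¹ v) = _
  rw [basisVec, T.muNat_phi, Pi.mulSingle_apply, Pi.mulSingle_apply, Equiv.Perm.inv_eq_iff_eq]

theorem genImage_mul_genImage (x y : V) :
    T.genImage x * T.genImage y =
      inl (T.basisVec x * T.basisVec (T.phi x y)) * inr (T.phi x * T.phi y) := by
  simp only [genImage, mul_assoc, ← mul_assoc (inr _), inr_mul_inl, mulAutArrow_phi_basisVec,
    map_mul]

theorem genImage_edge {x y : V} (h : T.graph.Adj x y) :
    T.genImage (T.phi x y) * T.genImage x = T.genImage (T.phi y x) * T.genImage y := by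
  have key : ∀ {x y : V}, T.graph.Adj x y → ¬ x < y →
      T.genImage (T.phi x y) * T.genImage x = T.genImage (T.phi y x) * T.genImage y := by
    intro x y h hxy
    rw [genImage_mul_genImage, genImage_mul_genImage, T.phi_phi_apply_self hxy,
      T.phi_phi_mul_phi h hxy, T.phi_apply_of_not_lt hxy, mul_comm (T.basisVec _)]
  by_cases hxy : x < y
  · exact (key h.symm (lt_asymm hxy)).symm
  · exact key h hxy

theorem genImage_zpow (x : V) (k : ℤ) :
    T.genImage x ^ k = inl (T.basisVec x ^ k) * inr (T.phi x ^ k) := by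
  have hcomm : Commute (inl (T.basisVec x) : Target V) (inr (T.phi x)) := by
    rw [Commute, SemiconjBy, inr_mul_inl, mulAutArrow_phi_basisVec, phi_self]
  rw [genImage, hcomm.mul_zpow, map_zpow, map_zpow]

theorem basisVec_pow_muNat (x : V) : T.basisVec x ^ T.muNat x = 1 := by
  rw [basisVec, ← Pi.mulSingle_pow, ← ofAdd_nsmul, ← Pi.single_smul, nsmul_one, ZMod.natCast_self]
  simp

theorem lift_genImage_rels : ∀ r ∈ T.rels, FreeGroup.lift T.genImage r = 1 := by
  rintro r (⟨x, n, hmu, rfl⟩ | ⟨x, y, h, rfl⟩)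
  · have hn : T.muNat x = n := by rw [muNat, hmu]; rfl
    have hphi : T.phi x ^ n = 1 := hn ▸ T.phi_pow_mu x
    rw [map_pow, FreeGroup.lift_apply_of, ← zpow_natCast, genImage_zpow, zpow_natCast,
      zpow_natCast, ← hn, basisVec_pow_muNat, hn, hphi, map_one, map_one, one_mul]
  · simp only [map_mul, map_inv, FreeGroup.lift_apply_of, mul_inv_eq_one]
    exact T.genImage_edge h

noncomputable def toTarget : TrickleGroup T →* Target V :=
  PresentedGroup.toGroup T.lift_genImage_rels

noncomputable def coeff (g : TrickleGroup T) (v : V) : ZMod (T.muNat v) :=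
  Multiplicative.toAdd ((T.toTarget g).left v) (T.muNat v)

theorem toTarget_zpow_of_left (x : V) (k : ℤ) :
    (T.toTarget (PresentedGroup.of x ^ k)).left = T.basisVec x ^ k := by
  rw [map_zpow, toTarget, PresentedGroup.toGroup.of, genImage_zpow]
  simp only [mul_left, left_inl, right_inl, left_inr, map_one, mul_one]

theorem coeff_zpow_of_self (x : V) (k : ℤ) :
    T.coeff (PresentedGroup.of x ^ k) x = k := by
  rw [coeff, toTarget_zpow_of_left]
  simp [basisVec]

theorem coeff_zpow_of_of_ne {x v : V} (h : v ≠ x) (k : ℤ) :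
    T.coeff (PresentedGroup.of x ^ k) v = 0 := by
  rw [coeff, toTarget_zpow_of_left]
  simp [basisVec, h]

theorem eq_of_zpow_of_eq_zpow_of {x y : V} {k l : ℤ}
    (h : (PresentedGroup.of x : TrickleGroup T) ^ k = PresentedGroup.of y ^ l)
    (hk : (k : ZMod (T.muNat x)) ≠ 0) : x = y := by
  by_contra hne
  rw [← T.coeff_zpow_of_self x k, h, T.coeff_zpow_of_of_ne hne] at hk
  exact hk rfl

theorem intCast_eq_of_zpow_of_eq_zpow_of {x : V} {k l : ℤ}
    (h : (PresentedGroup.of x : TrickleGroup T) ^ k = PresentedGroup.of x ^ l) :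
    (k : ZMod (T.muNat x)) = l := by
  rw [← T.coeff_zpow_of_self x k, h, T.coeff_zpow_of_self]

end TrickleGraph

/-- **Corollary 2.6.** The map from the set of syllables `S(Γ)` to the trickle group `Tr(Γ)`
sending `x^a` to `x^a` is injective; in particular distinct vertices represent distinct
elements of `Tr(Γ)`. -/
theorem Syllable.elm_injective {V : Type u} [PartialOrder V] (T : TrickleGraph V) :
    Function.Injective (Syllable.elm : Syllable T → TrickleGroup T) ∧
    Function.Injective (fun x : V => (PresentedGroup.of x : TrickleGroup T)) := by
  constructor
  · rintro ⟨x, a, ha⟩ ⟨y, b, hb⟩ h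
    obtain rfl : x = y := T.eq_of_zpow_of_eq_zpow_of h (by rwa [ZMod.intCast_zmod_cast])
    obtain rfl : a = b := by
      simpa only [ZMod.intCast_zmod_cast] using T.intCast_eq_of_zpow_of_eq_zpow_of h
    rfl
  · intro x y h
    refine T.eq_of_zpow_of_eq_zpow_of (k := 1) (l := 1) ?_ ?_
    · simpa only [zpow_one] using h
    · simp
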